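/- Let G be a graph with a vertex-cut {u,v} where uv is not an edge, and let G₁, G₂ be induced subgraphs with V(G₁) ∪ V(G₂) = V(G) and V(G₁) ∩ V(G₂) = {u,v}. Then χ_f(G) ≤ max{χ_f(G₁), χ_f(G₂ + uv), χ_f(G₂ / uv)}, where G₂ + uv is G₂ with the edge uv added and G₂/uv is G₂ with u and v identified. -/

import Mathlib

/-- An `(a:b)`-coloring of `G`. -/
def HasFracColoring {V : Type*} (G : SimpleGraph V) (a b : ℕ) : Prop :=
  ∃ f : V → Finset (Fin a), (∀ v, (f v).card = b) ∧
    ∀ u v, G.Adj u v → Disjoint (f u) (f v)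

/-- The fractional chromatic number. -/
noncomputable def fracChrom {V : Type*} (G : SimpleGraph V) : ℝ :=
  sInf {x : ℝ | ∃ a b : ℕ, 0 < a ∧ 0 < b ∧ HasFracColoring G a b ∧ x = (a : ℝ) / b}

/-- `S` is a vertex-cut of `G` if deleting `S` leaves a disconnected graph. -/
def IsVertexCut {V : Type*} (G : SimpleGraph V) (S : Set V) : Prop :=
  ¬ (G.induce (Sᶜ : Set V)).Preconnected

/-- The graph obtained from `H` by identifying `u` and `v` (the merged vertex is
named `u`; the vertex `v` becomes isolated), deleting resulting loops. -/
def contractPair {α : Type*} [DecidableEq α] (H : SimpleGraph α) (u v : α) :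
    SimpleGraph α :=
  SimpleGraph.fromRel (fun x y => ∃ x' y', H.Adj x' y' ∧
    x = (if x' = v then u else x') ∧ y = (if y' = v then u else y'))

/-!
Colour `G₁` with `(a₁:b₁)`, and let `t` be the number of colours shared by `u` and `v`. On the
other side, combine `b₃ (b₁ - t)` copies of an `(a₂:b₂)`-colouring of `G₂ + uv` (where `u`, `v`
share nothing) with `b₂ t` copies of an `(a₃:b₃)`-colouring of `G₂ / uv` (where they share
everything). Both sides then give every vertex `b₁ b₂ b₃` colours, and `u`, `v` share exactly
`b₂ b₃ t` of them, so after a permutation of the palette the two colourings agree on `{u, v}` and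
glue to a colouring of `G`. Its ratio is the maximum of `a₁/b₁` and a convex combination of
`a₂/b₂` and `a₃/b₃`.
-/

open Finset SimpleGraph

namespace Finset

variable {α β : Type*}

theorem disjSum_inter_disjSum [DecidableEq α] [DecidableEq β] (s s' : Finset α)
    (t t' : Finset β) : s.disjSum t ∩ s'.disjSum t' = (s ∩ s').disjSum (t ∩ t') := by
  ext x
  cases x <;> simp

theorem card_univ_product_inter_univ_product [Fintype α] [DecidableEq α] [DecidableEq β]
    (s t : Finset β) :
    #((univ : Finset α) ×ˢ s ∩ univ ×ˢ t) = Fintype.card α * #(s ∩ t) := by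
  rw [product_inter_product, univ_inter, card_product, card_univ]

theorem exists_perm_map_eq_of_card_inter [Fintype α] [DecidableEq α] {P Q P' Q' : Finset α}
    (hP : #P = #P') (hQ : #Q = #Q') (hPQ : #(P ∩ Q) = #(P' ∩ Q')) :
    ∃ σ : Equiv.Perm α, P.map σ.toEmbedding = P' ∧ Q.map σ.toEmbedding = Q' := by
  -- `σ` matches up the four Venn regions of `P, Q` and of `P', Q'`, which have equal sizes.
  let venn : Finset α → Finset α → α → Bool × Bool := fun R S x => (x ∈ R, x ∈ S)
  have hfiber : ∀ c,
      Fintype.card {x // venn P' Q' x = c} = Fintype.card {x // venn P Q x = c} := by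
    have hPQ' : #(P \ Q) = #(P' \ Q') := by
      rw [card_sdiff, card_sdiff, hP, inter_comm, hPQ, inter_comm]
    have hQP : #(Q \ P) = #(Q' \ P') := by rw [card_sdiff, card_sdiff, hQ, hPQ]
    have hU : #(P ∪ Q)ᶜ = #(P' ∪ Q')ᶜ := by simp only [card_compl, card_union, hP, hQ, hPQ]
    rintro ⟨_ | _, _ | _⟩ <;>
      simp only [venn, Fintype.card_subtype, Prod.mk.injEq, decide_eq_true_eq,
        decide_eq_false_iff_not]
    · convert hU.symm using 2 <;> ext <;> simp
    · convert hQP.symm using 2 <;> ext <;> simp [and_comm]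
    · convert hPQ'.symm using 2 <;> ext <;> simp
    · convert hPQ.symm using 2 <;> ext <;> simp
  let σ := Equiv.ofFiberEquiv fun c => Fintype.equivOfCardEq (hfiber c)
  have hσ : ∀ x, (σ x ∈ P ↔ x ∈ P') ∧ (σ x ∈ Q ↔ x ∈ Q') := fun x => by
    simpa only [venn, Prod.mk.injEq, decide_eq_decide] using
      Equiv.ofFiberEquiv_map (fun c => Fintype.equivOfCardEq (hfiber c)) x
  exact ⟨σ.symm, by ext x; simp [mem_map_equiv, (hσ x).1],
    by ext x; simp [mem_map_equiv, (hσ x).2]⟩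

end Finset

/-- An `(a:b)`-colouring with an arbitrary palette `K` in place of `Fin a`. -/
def IsFracColoring {V K : Type*} (G : SimpleGraph V) (f : V → Finset K) (b : ℕ) : Prop :=
  (∀ v, #(f v) = b) ∧ ∀ u v, G.Adj u v → Disjoint (f u) (f v)

namespace IsFracColoring

variable {V K L : Type*} {G H : SimpleGraph V} {f : V → Finset K} {g : V → Finset L} {b c : ℕ}

theorem singleton (G : SimpleGraph V) : IsFracColoring G (fun x => {x}) 1 :=
  ⟨fun _ => card_singleton _, fun _ _ h => disjoint_singleton.2 h.ne⟩

theorem mono (hf : IsFracColoring G f b) (h : H ≤ G) : IsFracColoring H f b :=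
  ⟨hf.1, fun x y hxy => hf.2 x y (h hxy)⟩

theorem map (hf : IsFracColoring G f b) (e : K ↪ L) :
    IsFracColoring G (fun x => (f x).map e) b :=
  ⟨fun x => by rw [card_map, hf.1], fun x y h => (disjoint_map e).2 (hf.2 x y h)⟩

theorem univ_product (ι : Type*) [Fintype ι] (hf : IsFracColoring G f b) :
    IsFracColoring G (fun x => (univ : Finset ι) ×ˢ f x) (Fintype.card ι * b) :=
  ⟨fun x => by rw [card_product, card_univ, hf.1],
    fun x y h => disjoint_product.2 (Or.inr (hf.2 x y h))⟩

theorem disjSum (hf : IsFracColoring G f b) (hg : IsFracColoring G g c) :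
    IsFracColoring G (fun x => (f x).disjSum (g x)) (b + c) := by
  classical
  refine ⟨fun x => by rw [card_disjSum, hf.1, hg.1], fun x y h => ?_⟩
  rw [disjoint_iff_inter_eq_empty, disjSum_inter_disjSum, disjSum_eq_empty,
    ← disjoint_iff_inter_eq_empty, ← disjoint_iff_inter_eq_empty]
  exact ⟨hf.2 x y h, hg.2 x y h⟩

theorem hasFracColoring [Fintype K] {a : ℕ} (hf : IsFracColoring G f b)
    (hK : Fintype.card K ≤ a) : HasFracColoring G a b := by
  obtain ⟨e⟩ := Function.Embedding.nonempty_of_card_le (hK.trans_eq (Fintype.card_fin a).symm)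
  exact ⟨_, hf.map e⟩

theorem disjoint_of_sup_edge {u v : V} (hf : IsFracColoring (G ⊔ fromEdgeSet {s(u, v)}) f b)
    (huv : u ≠ v) : Disjoint (f u) (f v) :=
  hf.2 u v (Or.inr ⟨rfl, huv⟩)

theorem of_contractPair [DecidableEq V] {u v : V} (hf : IsFracColoring (contractPair G u v) f b)
    (huv : ¬ G.Adj u v) : IsFracColoring G (fun x => f (if x = v then u else x)) b := by
  refine ⟨fun x => hf.1 _, fun x y hxy => hf.2 _ _ ?_⟩
  rw [contractPair, fromRel_adj]
  refine ⟨?_, Or.inl ⟨x, y, hxy, rfl, rfl⟩⟩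
  split_ifs with hx hy hy
  · exact absurd (hx.trans hy.symm) hxy.ne
  · rintro rfl
    exact huv (hx ▸ hxy.symm)
  · rintro rfl
    exact huv (hy ▸ hxy)
  · exact hxy.ne

variable {s₁ s₂ : Set V}

theorem glue (hunion : s₁ ∪ s₂ = Set.univ)
    (hedges : ∀ x y, G.Adj x y → (x ∈ s₁ ∧ y ∈ s₁) ∨ (x ∈ s₂ ∧ y ∈ s₂))
    {f₁ : s₁ → Finset K} {f₂ : s₂ → Finset K}
    (hf₁ : IsFracColoring (G.induce s₁) f₁ b) (hf₂ : IsFracColoring (G.induce s₂) f₂ b)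
    (hagree : ∀ x (h₁ : x ∈ s₁) (h₂ : x ∈ s₂), f₁ ⟨x, h₁⟩ = f₂ ⟨x, h₂⟩) :
    ∃ f : V → Finset K, IsFracColoring G f b := by
  classical
  have hmem : ∀ x, x ∉ s₁ → x ∈ s₂ := fun x hx =>
    ((Set.ext_iff.1 hunion x).2 trivial).resolve_left hx
  let f : V → Finset K := fun x => if h : x ∈ s₁ then f₁ ⟨x, h⟩ else f₂ ⟨x, hmem x h⟩
  have hf₁' : ∀ x (h : x ∈ s₁), f x = f₁ ⟨x, h⟩ := fun x h => dif_pos h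
  have hf₂' : ∀ x (h : x ∈ s₂), f x = f₂ ⟨x, h⟩ := fun x h => by
    by_cases h₁ : x ∈ s₁
    · exact (dif_pos h₁).trans (hagree x h₁ h)
    · exact dif_neg h₁
  refine ⟨f, fun x => ?_, fun x y hxy => ?_⟩
  · by_cases h₁ : x ∈ s₁
    · rw [hf₁' x h₁, hf₁.1]
    · rw [hf₂' x (hmem x h₁), hf₂.1]
  · rcases hedges x y hxy with ⟨hx, hy⟩ | ⟨hx, hy⟩
    · rw [hf₁' x hx, hf₁' y hy]
      exact hf₁.2 ⟨x, hx⟩ ⟨y, hy⟩ hxy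
    · rw [hf₂' x hx, hf₂' y hy]
      exact hf₂.2 ⟨x, hx⟩ ⟨y, hy⟩ hxy

/-- A permutation of the common palette `Fin (max _ _)` makes the two colourings agree on the
cut. -/
theorem hasFracColoring_of_two_cut [Fintype K] [Fintype L] [DecidableEq K] [DecidableEq L]
    {u v : V}
    (hunion : s₁ ∪ s₂ = Set.univ) (hinter : s₁ ∩ s₂ ⊆ {u, v})
    (hu₁ : u ∈ s₁) (hv₁ : v ∈ s₁) (hu₂ : u ∈ s₂) (hv₂ : v ∈ s₂)
    (hedges : ∀ x y, G.Adj x y → (x ∈ s₁ ∧ y ∈ s₁) ∨ (x ∈ s₂ ∧ y ∈ s₂))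
    {f₁ : s₁ → Finset K} {f₂ : s₂ → Finset L}
    (hf₁ : IsFracColoring (G.induce s₁) f₁ b) (hf₂ : IsFracColoring (G.induce s₂) f₂ b)
    (hoverlap : #(f₁ ⟨u, hu₁⟩ ∩ f₁ ⟨v, hv₁⟩) = #(f₂ ⟨u, hu₂⟩ ∩ f₂ ⟨v, hv₂⟩)) :
    HasFracColoring G (max (Fintype.card K) (Fintype.card L)) b := by
  set A := max (Fintype.card K) (Fintype.card L)
  obtain ⟨ι₁⟩ : Nonempty (K ↪ Fin A) :=
    Function.Embedding.nonempty_of_card_le (by simp [A])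
  obtain ⟨ι₂⟩ : Nonempty (L ↪ Fin A) :=
    Function.Embedding.nonempty_of_card_le (by simp [A])
  obtain ⟨σ, hσu, hσv⟩ := exists_perm_map_eq_of_card_inter
    (P := (f₂ ⟨u, hu₂⟩).map ι₂) (Q := (f₂ ⟨v, hv₂⟩).map ι₂)
    (P' := (f₁ ⟨u, hu₁⟩).map ι₁) (Q' := (f₁ ⟨v, hv₁⟩).map ι₁)
    (by simp only [card_map, hf₁.1, hf₂.1]) (by simp only [card_map, hf₁.1, hf₂.1])
    (by rw [← map_inter, ← map_inter, card_map, card_map, hoverlap])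
  obtain ⟨f, hf⟩ := glue hunion hedges (hf₁.map ι₁) (hf₂.map (ι₂.trans σ.toEmbedding))
    fun x h₁ h₂ => by
      rcases hinter ⟨h₁, h₂⟩ with rfl | rfl
      · simpa only [Finset.map_map] using hσu.symm
      · simpa only [Finset.map_map] using hσv.symm
  exact hf.hasFracColoring (Fintype.card_fin A).le

end IsFracColoring

theorem hasFracColoring_mix_of_two_cut {V K₁ K₂ K₃ : Type*} [Fintype K₁] [Fintype K₂]
    [Fintype K₃] [DecidableEq K₁] [DecidableEq K₂] [DecidableEq K₃] {G : SimpleGraph V}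
    {s₁ s₂ : Set V} {u v : V} (hunion : s₁ ∪ s₂ = Set.univ) (hinter : s₁ ∩ s₂ ⊆ {u, v})
    (hu₁ : u ∈ s₁) (hv₁ : v ∈ s₁) (hu₂ : u ∈ s₂) (hv₂ : v ∈ s₂)
    (hedges : ∀ x y, G.Adj x y → (x ∈ s₁ ∧ y ∈ s₁) ∨ (x ∈ s₂ ∧ y ∈ s₂))
    {f₁ : s₁ → Finset K₁} {f₂ : s₂ → Finset K₂} {f₃ : s₂ → Finset K₃} {b₁ b₂ b₃ : ℕ}
    (hf₁ : IsFracColoring (G.induce s₁) f₁ b₁) (hf₂ : IsFracColoring (G.induce s₂) f₂ b₂)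
    (hf₃ : IsFracColoring (G.induce s₂) f₃ b₃)
    (hf₂uv : Disjoint (f₂ ⟨u, hu₂⟩) (f₂ ⟨v, hv₂⟩)) (hf₃uv : f₃ ⟨u, hu₂⟩ = f₃ ⟨v, hv₂⟩) :
    ∃ t ≤ b₁, HasFracColoring G
      (max (b₂ * b₃ * Fintype.card K₁)
        (b₃ * (b₁ - t) * Fintype.card K₂ + b₂ * t * Fintype.card K₃)) (b₂ * b₃ * b₁) := by
  set t := #(f₁ ⟨u, hu₁⟩ ∩ f₁ ⟨v, hv₁⟩)
  have ht : t ≤ b₁ := hf₁.1 ⟨u, hu₁⟩ ▸ card_le_card inter_subset_left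
  have hb : b₃ * (b₁ - t) * b₂ + b₂ * t * b₃ = b₂ * b₃ * b₁ := by
    zify [ht]
    ring
  have hc₁ := hf₁.univ_product (Fin (b₂ * b₃))
  have hc₂ := (hf₂.univ_product (Fin (b₃ * (b₁ - t)))).disjSum
    (hf₃.univ_product (Fin (b₂ * t)))
  rw [Fintype.card_fin] at hc₁
  rw [Fintype.card_fin, Fintype.card_fin, hb] at hc₂
  refine ⟨t, ht, ?_⟩
  have hcol := IsFracColoring.hasFracColoring_of_two_cut hunion hinter hu₁ hv₁ hu₂ hv₂
    hedges hc₁ hc₂ (by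
      rw [disjSum_inter_disjSum, card_disjSum, card_univ_product_inter_univ_product,
        card_univ_product_inter_univ_product, card_univ_product_inter_univ_product,
        disjoint_iff_inter_eq_empty.1 hf₂uv, hf₃uv, inter_self, hf₃.1, card_empty,
        Fintype.card_fin, Fintype.card_fin, Fintype.card_fin]
      ring)
  simpa only [Fintype.card_prod, Fintype.card_sum, Fintype.card_fin] using hcol

theorem mix_div_le_max_div {a₁ b₁ a₂ b₂ a₃ b₃ t : ℕ} (hb₁ : 0 < b₁) (hb₂ : 0 < b₂)
    (hb₃ : 0 < b₃) (ht : t ≤ b₁) :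
    ((max (b₂ * b₃ * a₁) (b₃ * (b₁ - t) * a₂ + b₂ * t * a₃) : ℕ) : ℝ) / (b₂ * b₃ * b₁ : ℕ) ≤
      max ((a₁ : ℝ) / b₁) (max ((a₂ : ℝ) / b₂) ((a₃ : ℝ) / b₃)) := by
  set r := max ((a₁ : ℝ) / b₁) (max ((a₂ : ℝ) / b₂) ((a₃ : ℝ) / b₃))
  have h₁ : (a₁ : ℝ) ≤ r * b₁ := (div_le_iff₀ (by positivity)).1 (le_max_left _ _)
  have h₂ : (a₂ : ℝ) ≤ r * b₂ :=
    (div_le_iff₀ (by positivity)).1 ((le_max_left _ _).trans (le_max_right _ _))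
  have h₃ : (a₃ : ℝ) ≤ r * b₃ :=
    (div_le_iff₀ (by positivity)).1 ((le_max_right _ _).trans (le_max_right _ _))
  have ht' : (t : ℝ) ≤ b₁ := by exact_mod_cast ht
  rw [div_le_iff₀ (by positivity), Nat.cast_max]
  push_cast [Nat.cast_sub ht]
  refine max_le ?_ ?_
  · nlinarith [mul_le_mul_of_nonneg_left h₁ (by positivity : (0 : ℝ) ≤ b₂ * b₃)]
  · nlinarith [mul_le_mul_of_nonneg_left h₂ (by nlinarith : (0 : ℝ) ≤ b₃ * (b₁ - t)),
      mul_le_mul_of_nonneg_left h₃ (by positivity : (0 : ℝ) ≤ b₂ * t)]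

theorem fracChrom_le_div {V : Type*} {G : SimpleGraph V} {a b : ℕ} (ha : 0 < a) (hb : 0 < b)
    (h : HasFracColoring G a b) : fracChrom G ≤ (a : ℝ) / b :=
  csInf_le ⟨0, by rintro _ ⟨a, b, -, -, -, rfl⟩; positivity⟩ ⟨a, b, ha, hb, h, rfl⟩

theorem exists_hasFracColoring_div_lt {V : Type*} [Finite V] {G : SimpleGraph V} {r : ℝ}
    (h : fracChrom G < r) :
    ∃ a b : ℕ, 0 < a ∧ 0 < b ∧ HasFracColoring G a b ∧ (a : ℝ) / b < r := by
  have := Fintype.ofFinite V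
  rw [fracChrom] at h
  obtain ⟨_, ⟨a, b, ha, hb, hab, rfl⟩, hlt⟩ := exists_lt_of_csInf_lt
    (by exact ⟨_, Fintype.card V + 1, 1, Nat.succ_pos _, one_pos,
      (IsFracColoring.singleton G).hasFracColoring (Nat.le_succ _), rfl⟩) h
  exact ⟨a, b, ha, hb, hab, hlt⟩

theorem fracChrom_le_max_of_two_cut_nonedge_general {V : Type*} [Fintype V] [DecidableEq V]
    (G : SimpleGraph V) (u v : V) (huv : u ≠ v)
    (s₁ s₂ : Set V) (hunion : s₁ ∪ s₂ = Set.univ)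
    (hinter : s₁ ∩ s₂ = {u, v})
    (hu₂ : u ∈ s₂) (hv₂ : v ∈ s₂)
    (hedges : ∀ x y, G.Adj x y → (x ∈ s₁ ∧ y ∈ s₁) ∨ (x ∈ s₂ ∧ y ∈ s₂))
    (hnadj : ¬ G.Adj u v) :
    fracChrom G ≤
      max (fracChrom (G.induce s₁))
        (max (fracChrom (G.induce s₂ ⊔ SimpleGraph.fromEdgeSet {s(⟨u, hu₂⟩, ⟨v, hv₂⟩)}))
          (fracChrom (contractPair (G.induce s₂) ⟨u, hu₂⟩ ⟨v, hv₂⟩))) := by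
  have huv₁ : u ∈ s₁ ∩ s₂ ∧ v ∈ s₁ ∩ s₂ := by simp [hinter]
  by_contra! hlt
  obtain ⟨a₁, b₁, ha₁, hb₁, ⟨f₁, hf₁ : IsFracColoring _ f₁ b₁⟩, hr₁⟩ :=
    exists_hasFracColoring_div_lt ((le_max_left _ _).trans_lt hlt)
  obtain ⟨a₂, b₂, -, hb₂, ⟨f₂, hf₂ : IsFracColoring _ f₂ b₂⟩, hr₂⟩ :=
    exists_hasFracColoring_div_lt (((le_max_left _ _).trans (le_max_right _ _)).trans_lt hlt)
  obtain ⟨a₃, b₃, -, hb₃, ⟨f₃, hf₃ : IsFracColoring _ f₃ b₃⟩, hr₃⟩ :=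
    exists_hasFracColoring_div_lt (((le_max_right _ _).trans (le_max_right _ _)).trans_lt hlt)
  obtain ⟨t, ht, hcol⟩ := hasFracColoring_mix_of_two_cut hunion hinter.le huv₁.1.1 huv₁.2.1
    hu₂ hv₂ hedges hf₁ (hf₂.mono le_sup_left) (hf₃.of_contractPair hnadj)
    (hf₂.disjoint_of_sup_edge (by simpa using huv)) (by simp)
  simp only [Fintype.card_fin] at hcol
  have hχ := (fracChrom_le_div (lt_max_of_lt_left (by positivity)) (by positivity) hcol).trans
    (mix_div_le_max_div hb₁ hb₂ hb₃ ht)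
  exact hχ.not_gt (max_lt hr₁ (max_lt hr₂ hr₃))

/-- If `{u,v}` is a vertex-cut with `uv ∉ E(G)`, and `G` is the union of the induced
subgraphs `G₁ = G[s₁]` and `G₂ = G[s₂]` with `s₁ ∩ s₂ = {u,v}`, then
`χ_f(G) ≤ max (χ_f(G₁), χ_f(G₂ + uv), χ_f(G₂ / uv))`. -/
theorem fracChrom_le_max_of_two_cut_nonedge {V : Type*} [Fintype V] [DecidableEq V]
    (G : SimpleGraph V) (u v : V) (huv : u ≠ v)
    (s₁ s₂ : Set V) (hunion : s₁ ∪ s₂ = Set.univ)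
    (hinter : s₁ ∩ s₂ = {u, v})
    (hu₂ : u ∈ s₂) (hv₂ : v ∈ s₂)
    (hedges : ∀ x y, G.Adj x y → (x ∈ s₁ ∧ y ∈ s₁) ∨ (x ∈ s₂ ∧ y ∈ s₂))
    (hcut : IsVertexCut G ({u, v} : Set V))
    (hnadj : ¬ G.Adj u v) :
    fracChrom G ≤
      max (fracChrom (G.induce s₁))
        (max (fracChrom (G.induce s₂ ⊔ SimpleGraph.fromEdgeSet {s(⟨u, hu₂⟩, ⟨v, hv₂⟩)}))
          (fracChrom (contractPair (G.induce s₂) ⟨u, hu₂⟩ ⟨v, hv₂⟩))) :=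
  fracChrom_le_max_of_two_cut_nonedge_general G u v huv s₁ s₂ hunion hinter hu₂ hv₂ hedges hnadj
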